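/- Let G be a simple connected graph with n ≥ 2 vertices and m edges, and write a_k = d(G,k). Then the Harary index of the Mycielskian of G is Har(μ(G)) = (1/24)(17n² + 31n + 50m + 14a_2 + 2a_3). -/

import Mathlib

open SimpleGraph Polynomial Finset

/-- The Mycielskian `μ(G)` of a simple graph `G`. Vertices `Sum.inl v` are the original
vertices `v_i`, vertices `Sum.inr (Sum.inl v)` are the shadow vertices `u_i`, and
`Sum.inr (Sum.inr ())` is the apex vertex `w`.  Edges: the edges of `G`, the edges `w u_i`,
and the edges `u_i v_j`, `u_j v_i` for every edge `v_i v_j` of `G`. -/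
def mycielskian {V : Type*} (G : SimpleGraph V) : SimpleGraph (V ⊕ V ⊕ Unit) :=
  SimpleGraph.fromRel (fun a b =>
    match a, b with
    | Sum.inl a, Sum.inl b => G.Adj a b
    | Sum.inl a, Sum.inr (Sum.inl b) => G.Adj a b
    | Sum.inr (Sum.inl _), Sum.inr (Sum.inr _) => True
    | _, _ => False)

/-- `distCount G k` is `d(G,k)`, the number of unordered pairs of distinct vertices of `G`
whose graph distance is exactly `k`. -/
noncomputable def distCount {V : Type*} (G : SimpleGraph V) (k : ℕ) : ℕ :=
  Nat.card {e : Sym2 V // ¬ e.IsDiag ∧ Sym2.lift ⟨G.dist, fun _ _ => G.dist_comm⟩ e = k}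

/-- The Hosoya polynomial `H(G,x) = Σ_{k=1}^{D(G)} d(G,k) x^k` (with rational coefficients). -/
noncomputable def hosoya {V : Type*} (G : SimpleGraph V) : Polynomial ℚ :=
  ∑ k ∈ Finset.Icc 1 G.diam, (distCount G k : ℚ) • Polynomial.X ^ k

/-- The Wiener index `W(G)`: the sum of distances over all unordered pairs of distinct
vertices (the diagonal contributes `0`, so we may sum over ordered pairs and halve). -/
noncomputable def wiener {V : Type*} (G : SimpleGraph V) [Fintype V] : ℚ :=
  (∑ u : V, ∑ v : V, (G.dist u v : ℚ)) / 2

/-- The Hyper-Wiener index `WW(G) = (1/2) Σ_{{u,v}} (d(u,v)² + d(u,v))`. -/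
noncomputable def hyperWiener {V : Type*} (G : SimpleGraph V) [Fintype V] : ℚ :=
  (∑ u : V, ∑ v : V, ((G.dist u v : ℚ) ^ 2 + (G.dist u v : ℚ))) / 4

/-- The TSZ index `TSZ(G) = (1/6) Σ_{{u,v}} d³ + (1/2) Σ_{{u,v}} d² + (1/3) Σ_{{u,v}} d`. -/
noncomputable def tszIndex {V : Type*} (G : SimpleGraph V) [Fintype V] : ℚ :=
  (∑ u : V, ∑ v : V, (G.dist u v : ℚ) ^ 3) / 12
    + (∑ u : V, ∑ v : V, (G.dist u v : ℚ) ^ 2) / 4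
    + (∑ u : V, ∑ v : V, (G.dist u v : ℚ)) / 6

/-- The Harary index `Har(G) = Σ_{{u,v}} 1/d(u,v)` (diagonal terms are `0⁻¹ = 0`). -/
noncomputable def harary {V : Type*} (G : SimpleGraph V) [Fintype V] : ℚ :=
  (∑ u : V, ∑ v : V, ((G.dist u v : ℚ))⁻¹) / 2

/-- The closeness `C(G) = Σ_u Σ_{v ≠ u} 2^{-d(u,v)}` over ordered pairs of distinct vertices. -/
noncomputable def closeness {V : Type*} (G : SimpleGraph V) [Fintype V] : ℚ :=
  letI := Classical.decEq V
  ∑ u : V, ∑ v : V, if v = u then 0 else ((1 : ℚ) / 2) ^ (G.dist u v)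

/-- `σ_{uv}`: the number of shortest paths (walks of length `dist u v`) from `u` to `v`. -/
noncomputable def numSP {V : Type*} (G : SimpleGraph V) (u v : V) : ℕ :=
  Nat.card {p : G.Walk u v // p.length = G.dist u v}

/-- `σ_{uv}(w)`: the number of shortest paths from `u` to `v` passing through `w`. -/
noncomputable def numSPthrough {V : Type*} (G : SimpleGraph V) (w u v : V) : ℕ :=
  Nat.card {p : G.Walk u v // p.length = G.dist u v ∧ w ∈ p.support}

/-- The betweenness centrality `B_w = Σ_{{u,v}, u ≠ w ≠ v} σ_{uv}(w)/σ_{uv}` of a vertex `w`,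
summed over unordered pairs of distinct vertices (ordered pairs, halved). -/
noncomputable def btwVertex {V : Type*} (G : SimpleGraph V) [Fintype V] (w : V) : ℚ :=
  letI := Classical.decEq V
  (∑ u : V, ∑ v : V,
    if u ≠ v ∧ u ≠ w ∧ v ≠ w then (numSPthrough G w u v : ℚ) / (numSP G u v) else 0) / 2

/-- The betweenness centrality of a graph: `B⁻(G) = (1/N) Σ_w B_w`. -/
noncomputable def btw {V : Type*} (G : SimpleGraph V) [Fintype V] : ℚ :=
  (∑ w : V, btwVertex G w) / (Fintype.card V)

/-- The star graph `S_n`: center `0` joined to the `n` leaves `1, …, n`. -/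
def starGraph (n : ℕ) : SimpleGraph (Fin (n + 1)) :=
  SimpleGraph.fromRel (fun a _ => a = 0)

/-- The join `G₁ ⊕ G₂` of two graphs on disjoint vertex sets: all edges of `G₁`, all edges
of `G₂`, and all edges between `V(G₁)` and `V(G₂)`. -/
def joinGraph {V₁ V₂ : Type*} (G₁ : SimpleGraph V₁) (G₂ : SimpleGraph V₂) :
    SimpleGraph (V₁ ⊕ V₂) :=
  SimpleGraph.fromRel (fun a b =>
    match a, b with
    | Sum.inl a, Sum.inl b => G₁.Adj a b
    | Sum.inr a, Sum.inr b => G₂.Adj a b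
    | Sum.inl _, Sum.inr _ => True
    | _, _ => False)

/-!
Every distance in `μ(G)` is a function of the corresponding distance `d` in `G`:
`d(v_i, v_j) = min d 4`, `d(u_i, v_j) = min d 3` for `i ≠ j` and `2` for `i = j`,
`d(u_i, u_j) = 2` for `i ≠ j`, `d(u_i, w) = 1` and `d(v_i, w) = 2`.  The upper bounds come from
explicit walks, through the apex `w` for the truncations; the lower bounds hold because the
candidate distance changes by at most one along every edge of `μ(G)`.  Each block of the sum
defining `Har(μ(G))` is then `n² c + Σ_{k < 4} #{d = k} (f k - c)` for the profile `f` of the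
block and its eventual value `c`, and there are `n`, `2m`, `2a₂`, `2a₃` ordered pairs at
distance `0, 1, 2, 3`.
-/

theorem Finset.sum_comp_eq_card_smul_add_sum_range {ι M : Type*} [AddCommGroup M]
    (s : Finset ι) (g : ι → ℕ) (f : ℕ → M) {c : M} {K : ℕ} (hf : ∀ d, K ≤ d → f d = c) :
    ∑ x ∈ s, f (g x) = #s • c + ∑ k ∈ range K, #{x ∈ s | g x = k} • (f k - c) := by
  have hf' (d : ℕ) : f d = c + ∑ k ∈ range K, if d = k then f k - c else 0 := by
    rw [sum_ite_eq]
    split_ifs with hd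
    · abel
    · rw [hf d (by simpa using hd), add_zero]
  rw [sum_congr rfl fun x _ => hf' (g x), sum_add_distrib, sum_const, sum_comm]
  simp_rw [← sum_filter, sum_const]

namespace SimpleGraph

variable {V : Type*} {G : SimpleGraph V}

theorem Connected.exists_adj [Nontrivial V] (hc : G.Connected) (v : V) : ∃ w, G.Adj v w :=
  exists_adj_iff_not_isIsolated.mpr (hc.preconnected.not_isIsolated v)

lemma Connected.dist_le_dist_add_one_of_adj (hc : G.Connected) {i i' : V} (h : G.Adj i i')
    (j : V) : G.dist i j ≤ G.dist i' j + 1 := by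
  simpa [dist_eq_one_iff_adj.mpr h, add_comm] using hc.dist_triangle (u := i) (v := i') (w := j)

lemma Connected.dist_eq_one_of_adj_of_dist_eq_zero (hc : G.Connected) {i i' j : V}
    (h : G.Adj i i') (hj : G.dist i j = 0) : G.dist i' j = 1 := by
  rw [← hc.dist_eq_zero_iff.mp hj, dist_eq_one_iff_adj]
  exact h.symm

lemma sum_sum_comp_dist_eq {M : Type*} [Fintype V] [AddCommGroup M] (G : SimpleGraph V)
    (f : ℕ → M) {c : M} {K : ℕ} (hf : ∀ d, K ≤ d → f d = c) :
    ∑ u, ∑ v, f (G.dist u v) =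
      Fintype.card V ^ 2 • c + ∑ k ∈ range K, #{p : V × V | G.dist p.1 p.2 = k} • (f k - c) := by
  rw [← Fintype.sum_prod_type',
    sum_comp_eq_card_smul_add_sum_range univ (fun p : V × V => G.dist p.1 p.2) f hf,
    card_univ, Fintype.card_prod, sq]

def distGraph (G : SimpleGraph V) (k : ℕ) : SimpleGraph V where
  Adj u v := u ≠ v ∧ G.dist u v = k
  symm := ⟨fun _ _ h => ⟨h.1.symm, G.dist_comm ▸ h.2⟩⟩
  loopless := ⟨fun _ h => h.1 rfl⟩

noncomputable instance [DecidableEq V] (k : ℕ) : DecidableRel (G.distGraph k).Adj :=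
  fun u v => inferInstanceAs (Decidable (u ≠ v ∧ G.dist u v = k))

variable (G) in
lemma distGraph_one : G.distGraph 1 = G := by
  ext u v
  simpa [distGraph, dist_eq_one_iff_adj] using fun h : G.Adj u v => h.ne

end SimpleGraph

section distCount

variable {V : Type*} (G : SimpleGraph V)

lemma distCount_eq_card_edgeSet (k : ℕ) : distCount G k = Nat.card (G.distGraph k).edgeSet :=
  Nat.card_congr <| Equiv.subtypeEquivRight fun e => e.ind fun u v => by simp [distGraph]

lemma distCount_one : distCount G 1 = Nat.card G.edgeSet := by
  rw [distCount_eq_card_edgeSet, distGraph_one]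

variable [Fintype V]

lemma two_mul_distCount [DecidableEq V] (k : ℕ) :
    2 * distCount G k = #{p : V × V | p.1 ≠ p.2 ∧ G.dist p.1 p.2 = k} := by
  rw [distCount_eq_card_edgeSet, Nat.card_eq_fintype_card, ← edgeFinset_card,
    two_mul_card_edgeFinset]
  rfl

lemma SimpleGraph.card_filter_dist_eq_of_ne_zero {k : ℕ} (hk : k ≠ 0) :
    #{p : V × V | G.dist p.1 p.2 = k} = 2 * distCount G k := by
  classical
  rw [two_mul_distCount]
  congr 1
  ext ⟨u, v⟩
  simp only [mem_filter, mem_univ, true_and, iff_and_self]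
  rintro h rfl
  simp [← h] at hk

variable {G}

lemma SimpleGraph.Connected.card_filter_dist_eq_zero (hc : G.Connected) :
    #{p : V × V | G.dist p.1 p.2 = 0} = Fintype.card V := by
  classical
  rw [← card_univ, ← (univ : Finset V).diag_card]
  congr 1
  ext
  simp [hc.dist_eq_zero_iff]

end distCount

section Mycielskian

variable {V : Type*} {G : SimpleGraph V}

@[simp] lemma mycielskian_adj_inl_inl {i j : V} :
    (mycielskian G).Adj (.inl i) (.inl j) ↔ G.Adj i j := by
  simpa [mycielskian, adj_comm] using fun h : G.Adj i j => h.ne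

@[simp] lemma mycielskian_adj_inl_inr_inl {i j : V} :
    (mycielskian G).Adj (.inl i) (.inr (.inl j)) ↔ G.Adj i j := by
  simp [mycielskian]

@[simp] lemma mycielskian_adj_inr_inl_inl {i j : V} :
    (mycielskian G).Adj (.inr (.inl i)) (.inl j) ↔ G.Adj j i := by
  simp [mycielskian]

@[simp] lemma mycielskian_adj_inr_inl_inr_inr {i : V} {u : Unit} :
    (mycielskian G).Adj (.inr (.inl i)) (.inr (.inr u)) := by
  simp [mycielskian]

@[simp] lemma mycielskian_adj_inr_inr_inr_inl {i : V} {u : Unit} :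
    (mycielskian G).Adj (.inr (.inr u)) (.inr (.inl i)) := by
  simp [mycielskian]

@[simp] lemma not_mycielskian_adj_inl_inr_inr {i : V} {u : Unit} :
    ¬ (mycielskian G).Adj (.inl i) (.inr (.inr u)) := by
  simp [mycielskian]

@[simp] lemma not_mycielskian_adj_inr_inr_inl {i : V} {u : Unit} :
    ¬ (mycielskian G).Adj (.inr (.inr u)) (.inl i) := by
  simp [mycielskian]

@[simp] lemma not_mycielskian_adj_inr_inl_inr_inl {i j : V} :
    ¬ (mycielskian G).Adj (.inr (.inl i)) (.inr (.inl j)) := by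
  simp [mycielskian]

@[simp] lemma not_mycielskian_adj_inr_inr_inr_inr {u u' : Unit} :
    ¬ (mycielskian G).Adj (.inr (.inr u)) (.inr (.inr u')) := by
  simp [mycielskian]

def mycielskianInl (G : SimpleGraph V) : G →g mycielskian G :=
  ⟨Sum.inl, mycielskian_adj_inl_inl.mpr⟩

/-- The distances of `mycielskian G` when `G` is connected with at least two vertices
(`G.dist i j = 0` encodes `i = j`). -/
noncomputable def mycielskianDist (G : SimpleGraph V) : V ⊕ V ⊕ Unit → V ⊕ V ⊕ Unit → ℕ
  | .inl i, .inl j => min (G.dist i j) 4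
  | .inl i, .inr (.inl j) | .inr (.inl i), .inl j =>
      if G.dist i j = 0 then 2 else min (G.dist i j) 3
  | .inr (.inl i), .inr (.inl j) => if G.dist i j = 0 then 0 else 2
  | .inl _, .inr (.inr _) | .inr (.inr _), .inl _ => 2
  | .inr (.inl _), .inr (.inr _) | .inr (.inr _), .inr (.inl _) => 1
  | .inr (.inr _), .inr (.inr _) => 0

lemma mycielskianDist_self (x : V ⊕ V ⊕ Unit) : mycielskianDist G x x = 0 := by
  rcases x with i | i | u <;> simp [mycielskianDist]

lemma mycielskianDist_le_add_one_of_adj (hc : G.Connected) {x x' : V ⊕ V ⊕ Unit}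
    (h : (mycielskian G).Adj x x') (y : V ⊕ V ⊕ Unit) :
    mycielskianDist G x y ≤ mycielskianDist G x' y + 1 := by
  rcases x with i | i | u <;> rcases x' with i' | i' | u' <;> simp at h <;>
    rcases y with j | j | v <;> simp only [mycielskianDist]
  all_goals first
    | omega
    | have := hc.dist_le_dist_add_one_of_adj h j
      have := hc.dist_le_dist_add_one_of_adj h.symm j
      have := hc.dist_eq_one_of_adj_of_dist_eq_zero h (j := j)
      have := hc.dist_eq_one_of_adj_of_dist_eq_zero h.symm (j := j)
      (try split_ifs) <;> omega
    | split_ifs <;> omega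

lemma mycielskianDist_le_length (hc : G.Connected) {x y : V ⊕ V ⊕ Unit}
    (p : (mycielskian G).Walk x y) : mycielskianDist G x y ≤ p.length := by
  induction p with
  | nil => simp [mycielskianDist_self]
  | cons h q ih =>
    rw [Walk.length_cons]
    exact (mycielskianDist_le_add_one_of_adj hc h _).trans (by omega)

lemma dist_mycielskian_inl_inl_le (hc : G.Connected) (i j : V) :
    (mycielskian G).dist (.inl i) (.inl j) ≤ G.dist i j := by
  obtain ⟨p, hp⟩ := (hc i j).exists_walk_length_eq_dist
  exact (dist_le (p.map (mycielskianInl G))).trans_eq (by rw [Walk.length_map, hp])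

lemma dist_mycielskian_inr_inl_le (hc : G.Connected) {i j : V} (hij : G.dist i j ≠ 0) :
    (mycielskian G).dist (.inr (.inl i)) (.inl j) ≤ G.dist i j := by
  obtain ⟨p, hp⟩ := (hc i j).exists_walk_length_eq_dist
  cases p with
  | nil => exact absurd hp.symm hij
  | cons h q =>
    have h' : (mycielskian G).Adj (.inr (.inl i)) (mycielskianInl G _) :=
      mycielskian_adj_inr_inl_inl.mpr h.symm
    exact (dist_le (.cons h' (q.map (mycielskianInl G)))).trans_eq
      (by rw [← hp, Walk.length_cons, Walk.length_cons, Walk.length_map])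

variable [Nontrivial V]

lemma mycielskian_reachable_apex (hc : G.Connected) (x : V ⊕ V ⊕ Unit) :
    (mycielskian G).Reachable x (.inr (.inr ())) := by
  rcases x with i | i | ⟨⟩
  · obtain ⟨a, ha⟩ := hc.exists_adj i
    exact ⟨.cons (mycielskian_adj_inl_inr_inl.mpr ha) (.cons mycielskian_adj_inr_inl_inr_inr .nil)⟩
  · exact mycielskian_adj_inr_inl_inr_inr.reachable
  · rfl

lemma mycielskian_connected (hc : G.Connected) : (mycielskian G).Connected :=
  (connected_iff_exists_forall_reachable _).mpr
    ⟨.inr (.inr ()), fun x => (mycielskian_reachable_apex hc x).symm⟩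

lemma dist_mycielskian_le (hc : G.Connected) (x y : V ⊕ V ⊕ Unit) :
    (mycielskian G).dist x y ≤ mycielskianDist G x y := by
  have apex_adj {i : V} := @mycielskian_adj_inr_inl_inr_inr V G i ()
  rcases x with i | i | ⟨⟩ <;> rcases y with j | j | ⟨⟩ <;> simp only [mycielskianDist]
  · obtain ⟨a, ha⟩ := hc.exists_adj i
    obtain ⟨b, hb⟩ := hc.exists_adj j
    exact le_min (dist_mycielskian_inl_inl_le hc i j) (dist_le (.cons
      (mycielskian_adj_inl_inr_inl.mpr ha) (.cons apex_adj (.cons apex_adj.symm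
      (.cons (mycielskian_adj_inr_inl_inl.mpr hb) .nil)))))
  · split_ifs with hij
    · obtain rfl := hc.dist_eq_zero_iff.mp hij
      obtain ⟨a, ha⟩ := hc.exists_adj i
      exact dist_le (.cons (mycielskian_adj_inl_inl.mpr ha)
        (.cons (mycielskian_adj_inl_inr_inl.mpr ha.symm) .nil))
    · rw [(mycielskian G).dist_comm, G.dist_comm]
      rw [G.dist_comm] at hij
      obtain ⟨b, hb⟩ := hc.exists_adj i
      exact le_min (dist_mycielskian_inr_inl_le hc hij) (dist_le (.cons apex_adj
        (.cons apex_adj.symm (.cons (mycielskian_adj_inr_inl_inl.mpr hb) .nil))))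
  · obtain ⟨a, ha⟩ := hc.exists_adj i
    exact dist_le (.cons (mycielskian_adj_inl_inr_inl.mpr ha) (.cons apex_adj .nil))
  · split_ifs with hij
    · obtain rfl := hc.dist_eq_zero_iff.mp hij
      obtain ⟨a, ha⟩ := hc.exists_adj i
      exact dist_le (.cons (mycielskian_adj_inr_inl_inl.mpr ha.symm)
        (.cons (mycielskian_adj_inl_inl.mpr ha.symm) .nil))
    · obtain ⟨b, hb⟩ := hc.exists_adj j
      exact le_min (dist_mycielskian_inr_inl_le hc hij) (dist_le (.cons apex_adj
        (.cons apex_adj.symm (.cons (mycielskian_adj_inr_inl_inl.mpr hb) .nil))))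
  · split_ifs with hij
    · simp [hc.dist_eq_zero_iff.mp hij]
    · exact dist_le (.cons apex_adj (.cons apex_adj.symm .nil))
  · exact dist_le (.cons apex_adj .nil)
  · obtain ⟨a, ha⟩ := hc.exists_adj j
    exact dist_le (.cons apex_adj.symm (.cons (mycielskian_adj_inr_inl_inl.mpr ha) .nil))
  · exact dist_le (.cons apex_adj.symm .nil)
  · simp

theorem dist_mycielskian (hc : G.Connected) (x y : V ⊕ V ⊕ Unit) :
    (mycielskian G).dist x y = mycielskianDist G x y := by
  refine (dist_mycielskian_le hc x y).antisymm ?_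
  obtain ⟨p, hp⟩ := (mycielskian_connected hc).preconnected x y |>.exists_walk_length_eq_dist
  exact hp ▸ mycielskianDist_le_length hc p

end Mycielskian

/-- For a connected graph `G` with `n ≥ 2` vertices and `m` edges, with
`a_k = d(G,k)`, the Harary index of `μ(G)` is `(1/24)(17n² + 31n + 50m + 14a₂ + 2a₃)`. -/
theorem stmt_11 {V : Type*} [Fintype V] (G : SimpleGraph V) (n m : ℕ)
    (hn : Fintype.card V = n) (hn2 : 2 ≤ n) (hm : Nat.card G.edgeSet = m)
    (hc : G.Connected) :
    harary (mycielskian G) =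
      (17 * (n : ℚ) ^ 2 + 31 * n + 50 * m + 14 * distCount G 2 + 2 * distCount G 3) / 24 := by
  subst hn hm
  have : Nontrivial V := Fintype.one_lt_card_iff_nontrivial.mp hn2
  rw [← distCount_one]
  simp only [harary, dist_mycielskian hc, Fintype.sum_sum_type, univ_unique, sum_singleton,
    mycielskianDist, sum_add_distrib]
  rw [G.sum_sum_comp_dist_eq (fun d => ((min d 4 : ℕ) : ℚ)⁻¹) (c := 4⁻¹) (K := 4)
      fun d hd => by simp [hd],
    G.sum_sum_comp_dist_eq (fun d => ((if d = 0 then 2 else min d 3 : ℕ) : ℚ)⁻¹) (c := 3⁻¹)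
      (K := 4) fun d hd => by simp [show d ≠ 0 by omega, show 3 ≤ d by omega],
    G.sum_sum_comp_dist_eq (fun d => ((if d = 0 then 0 else 2 : ℕ) : ℚ)⁻¹) (c := 2⁻¹)
      (K := 4) fun d hd => by simp [show d ≠ 0 by omega]]
  norm_num [sum_range_succ, hc.card_filter_dist_eq_zero, card_filter_dist_eq_of_ne_zero]
  ring
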